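/- Let R be a strongly connected relation on a finite set X with period q and eventual period p. Then R^{p+kq} = R^p for every natural number k. -/

import Mathlib

/-- The `n`-th power of a relation (`R^0 = id`). -/
def relPow {X : Type*} (R : Rel X X) : ℕ → Rel X X
  | 0 => fun x y => x = y
  | n + 1 => Relation.Comp (relPow R n) R

/-- A relation is strongly connected if any two points are joined by a walk of
positive length. -/
def StronglyConnectedRel {X : Type*} (R : Rel X X) : Prop :=
  ∀ x y : X, ∃ n : ℕ, 1 ≤ n ∧ relPow R n x y

/-- `q` is the period of `R`: the greatest common divisor of the lengths of all
cycles (closed walks of positive length) in the digraph `(X, R)`. -/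
def IsPeriodOf {X : Type*} (R : Rel X X) (q : ℕ) : Prop :=
  (∀ n : ℕ, 1 ≤ n → (∃ x, relPow R n x x) → q ∣ n) ∧
    ∀ d : ℕ, (∀ n : ℕ, 1 ≤ n → (∃ x, relPow R n x x) → d ∣ n) → d ∣ q

/-- `p` is an eventual period of `R`. -/
def IsEventualPeriod {X : Type*} (R : Rel X X) (p : ℕ) : Prop :=
  1 ≤ p ∧ ∀ i ≥ p, relPow R (i + p) = relPow R i

lemma relPow_add {X : Type*} (R : Rel X X) (a b : ℕ) :
    relPow R (a + b) = Relation.Comp (relPow R a) (relPow R b) := by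
  induction b with
  | zero =>
    funext x y
    simp only [Nat.add_zero, relPow, Relation.Comp, eq_iff_iff]
    constructor
    · intro h; exact ⟨y, h, rfl⟩
    · rintro ⟨z, h, rfl⟩; exact h
  | succ b ih =>
    show relPow R ((a + b) + 1) = _
    simp only [relPow] at *
    rw [ih, Relation.comp_assoc]

lemma relPow_trans {X : Type*} {R : Rel X X} {a b : ℕ} {x y z : X}
    (h1 : relPow R a x y) (h2 : relPow R b y z) : relPow R (a + b) x z := by
  rw [relPow_add]; exact ⟨y, h1, h2⟩

lemma relPow_smul {X : Type*} {R : Rel X X} (k : ℕ) {a : ℕ} {x : X}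
    (h : relPow R a x x) : relPow R (k * a) x x := by
  induction k with
  | zero => rw [Nat.zero_mul]; exact (rfl : x = x)
  | succ k ih =>
    have : (k + 1) * a = k * a + a := by ring
    rw [this]
    exact relPow_trans ih h

/-- Key combinatorial lemma: every sufficiently large multiple of the period `q`
is the length of a closed walk at any fixed vertex `x`. -/
lemma exists_cycle_bound {X : Type*} (R : Rel X X) (hconn : StronglyConnectedRel R)
    {q : ℕ} (hq : IsPeriodOf R q) (x : X) :
    ∃ N : ℕ, ∀ t ≥ N, relPow R (q * t) x x := by
  classical
  obtain ⟨n, hn1, hnx⟩ := hconn x x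
  have hD : ∃ d, 0 < d ∧ ∃ a b : ℕ, relPow R a x x ∧ relPow R b x x ∧ a = b + d :=
    ⟨n, hn1, n + n, n, relPow_trans hnx hnx, hnx, rfl⟩
  obtain ⟨hgpos, a, b, ha, hb, hab⟩ := Nat.find_spec hD
  set g := Nat.find hD with hgdef
  -- every cycle length at x is divisible by g
  have hdvd : ∀ t, relPow R t x x → g ∣ t := by
    intro t ht
    by_contra hnd
    have hr : t % g ≠ 0 := fun h => hnd (Nat.dvd_of_mod_eq_zero h)
    have hrlt : t % g < g := Nat.mod_lt _ hgpos
    apply Nat.find_min hD hrlt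
    refine ⟨Nat.pos_of_ne_zero hr, (t / g) * b + t, (t / g) * a,
      relPow_trans (relPow_smul (t / g) hb) ht, relPow_smul (t / g) ha, ?_⟩
    have h2 : g * (t / g) + t % g = t := Nat.div_add_mod t g
    calc (t / g) * b + t = (t / g) * b + (g * (t / g) + t % g) := by rw [h2]
      _ = (t / g) * (b + g) + t % g := by ring
      _ = (t / g) * a + t % g := by rw [← hab]
  -- g divides every cycle length anywhere, hence g ∣ q
  have hgq : g ∣ q := by
    apply hq.2
    intro n' _ hy
    obtain ⟨y, hy⟩ := hy
    obtain ⟨α, _, hαp⟩ := hconn x y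
    obtain ⟨β, _, hβp⟩ := hconn y x
    have c1 : relPow R (α + β) x x := relPow_trans hαp hβp
    have c2 : relPow R ((α + β) + n') x x := by
      have : (α + β) + n' = α + (n' + β) := by omega
      rw [this]
      exact relPow_trans hαp (relPow_trans hy hβp)
    have h3 := Nat.dvd_sub (hdvd _ c2) (hdvd _ c1)
    simpa [Nat.add_sub_cancel_left] using h3
  -- q ∣ g
  have hqa : q ∣ a := hq.1 a (by omega) ⟨x, ha⟩
  have hqb : q ∣ b := by
    rcases Nat.eq_zero_or_pos b with h0 | hpos
    · simp [h0]
    · exact hq.1 b hpos ⟨x, hb⟩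
  have hqg : q ∣ g := (Nat.dvd_add_right hqb).mp (hab ▸ hqa)
  have hgeq : g = q := Nat.dvd_antisymm hgq hqg
  obtain ⟨m, hbm⟩ := hqb
  refine ⟨m * m, ?_⟩
  intro t ht
  rcases Nat.eq_zero_or_pos m with hm0 | hmpos
  · have haq : a = q := by rw [hab, hbm, hm0, hgeq]; ring
    have h := relPow_smul (R := R) t ha
    have : q * t = t * a := by rw [haq]; ring
    rw [this]; exact h
  · set r := t % m with hrdef
    have hrm : r < m := Nat.mod_lt _ hmpos
    have hdm : m ≤ t / m := (Nat.le_div_iff_mul_le hmpos).mpr ht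
    obtain ⟨e, he⟩ : ∃ e, t / m = e + r := ⟨t / m - r, by omega⟩
    have hcycle : relPow R (e * b + r * a) x x :=
      relPow_trans (relPow_smul e hb) (relPow_smul r ha)
    have ht' : t = m * (e + r) + r := by
      conv_lhs => rw [← Nat.div_add_mod t m]
      rw [he]
    have harith : q * t = e * b + r * a := by
      rw [ht', hab, hbm, hgeq]; ring
    rw [harith]; exact hcycle

lemma relPow_stable {X : Type*} {R : Rel X X} {p : ℕ} (hp : IsEventualPeriod R p)
    {i : ℕ} (hi : p ≤ i) : ∀ j : ℕ, relPow R (i + j * p) = relPow R i := by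
  intro j
  induction j with
  | zero => simp
  | succ j ih =>
    have : i + (j + 1) * p = (i + j * p) + p := by ring
    rw [this, hp.2 (i + j * p) (by omega), ih]

theorem pow_add_mul_period_eq {X : Type*} [Finite X] (R : Rel X X)
    (hconn : StronglyConnectedRel R) (q p : ℕ) (hq1 : 1 ≤ q) (hq : IsPeriodOf R q)
    (hp : IsEventualPeriod R p) :
    ∀ k : ℕ, relPow R (p + k * q) = relPow R p := by
  rcases isEmpty_or_nonempty X with hX | hX
  · intro k; funext x y; exact (IsEmpty.false x).elim
  · obtain ⟨x0⟩ := hX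
    have hp1 : 1 ≤ p := hp.1
    -- q ∣ p
    have hqp : q ∣ p := by
      obtain ⟨n, hn1, hnx⟩ := hconn x0 x0
      have hc : relPow R (p * n) x0 x0 := relPow_smul p hnx
      have hpn : p ≤ p * n := Nat.le_mul_of_pos_right p hn1
      have heq := hp.2 (p * n) hpn
      have hc2 : relPow R (p * n + p) x0 x0 := by rw [heq]; exact hc
      have d1 : q ∣ p * n + p := hq.1 _ (by omega) ⟨x0, hc2⟩
      have d2 : q ∣ p * n := hq.1 _ (Nat.mul_pos (by omega) (by omega)) ⟨x0, hc⟩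
      exact (Nat.dvd_add_right d2).mp d1
    obtain ⟨m, hm⟩ := hqp
    have hm1 : 1 ≤ m := by
      rcases Nat.eq_zero_or_pos m with h0 | h
      · rw [h0, Nat.mul_zero] at hm; omega
      · exact h
    obtain ⟨m', hm'⟩ : ∃ m', m = m' + 1 := ⟨m - 1, by omega⟩
    -- the crucial single step: R^(p+q) = R^p
    have hpq : relPow R (p + q) = relPow R p := by
      funext x y
      obtain ⟨N, hN⟩ := exists_cycle_bound R hconn hq x
      simp only [eq_iff_iff]
      constructor
      · -- R^(p+q) x y → R^p x y
        intro h
        set s := m' * (N + 1) + N with hs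
        have hsN : N ≤ s := by omega
        have hcyc : relPow R (q * s) x x := hN s hsN
        have hcomp : relPow R (q * s + (p + q)) x y := relPow_trans hcyc h
        have harith : q * s + (p + q) = p + (N + 1) * p := by
          rw [hm, hm', hs]; ring
        rw [harith] at hcomp
        have := relPow_stable hp (le_refl p) (N + 1)
        rw [this] at hcomp
        exact hcomp
      · -- R^p x y → R^(p+q) x y
        intro h
        set s := 1 + N * m with hs
        have hsN : N ≤ s := by have := Nat.le_mul_of_pos_right N hm1; omega
        have hcyc : relPow R (q * s) x x := hN s hsN
        have hcomp : relPow R (q * s + p) x y := relPow_trans hcyc h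
        have harith : q * s + p = (p + q) + N * p := by
          rw [hm, hs]; ring
        rw [harith] at hcomp
        have := relPow_stable hp (by omega : p ≤ p + q) N
        rw [this] at hcomp
        exact hcomp
    intro k
    induction k with
    | zero => simp
    | succ k ih =>
      have h1 : p + (k + 1) * q = (p + k * q) + q := by ring
      rw [h1, relPow_add, ih, ← relPow_add, hpq]
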